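/- Let C ⊆ F4^n be an additive code such that C^⊥_tr contains no codewords of Hamming weight 1, and let A_2^⊥ denote the number of codewords of Hamming weight 2 in C^⊥_tr. Then the trace-Hermitian dual S(C)^⊥_tr ⊆ F4^{2n} contains no codewords of weight 1 and contains exactly 3n + 4·A_2^⊥ codewords of weight 2. In particular, if C^⊥_tr has minimum distance at least 3, then S(C)^⊥_tr has exactly 3n codewords of weight 2. -/
import Mathlib


abbrev F4 : Type := GaloisField 2 2
noncomputable instance : Fintype F4 := Fintype.ofFinite _
noncomputable instance : DecidableEq F4 := Classical.decEq _

/-- The map `S : F4^n → F4^{2n}`, sending `(v_0,…,v_{n-1})` to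
`(v_0, v_0², v_1, v_1², …, v_{n-1}, v_{n-1}²)` (conjugation on `F4` is squaring). -/
noncomputable def Smap (n : ℕ) (v : Fin n → F4) : Fin (2 * n) → F4 :=
  fun i =>
    if i.val % 2 = 0 then v ⟨i.val / 2, by have h := i.isLt; omega⟩
    else (v ⟨i.val / 2, by have h := i.isLt; omega⟩) ^ 2

/-- The trace Hermitian inner product `⟨u,v⟩_tr = Σᵢ (uᵢ vᵢ² + uᵢ² vᵢ)` on `F4^m`. -/
noncomputable def trInner {m : ℕ} (u v : Fin m → F4) : F4 :=
  ∑ i, (u i * (v i) ^ 2 + (u i) ^ 2 * v i)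

/-- The trace-Hermitian dual of a code `C ⊆ F4^m`. -/
noncomputable def trDual {m : ℕ} (C : Set (Fin m → F4)) : Set (Fin m → F4) :=
  {u | ∀ v ∈ C, trInner u v = 0}

lemma F4_card : Fintype.card F4 = 4 := by
  rw [← Nat.card_eq_fintype_card]
  exact GaloisField.card 2 2 (by norm_num)

lemma F4_pow4 (x : F4) : x ^ 4 = x := by
  have := FiniteField.pow_card x
  rwa [F4_card] at this

lemma F4_add_sq (a b : F4) : (a + b) ^ 2 = a ^ 2 + b ^ 2 := add_pow_char a b 2

lemma F4_sq_inj {a b : F4} (h : a ^ 2 = b ^ 2) : a = b := by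
  have : a ^ 4 = b ^ 4 := by rw [show (4:ℕ) = 2*2 from rfl, pow_mul, pow_mul, h]
  rwa [F4_pow4, F4_pow4] at this

lemma F4_sq_sq (a : F4) : (a ^ 2) ^ 2 = a := by rw [← pow_mul]; exact F4_pow4 a

lemma sum_split (n : ℕ) (f : Fin (2*n) → F4) :
    ∑ j, f j = ∑ i : Fin n,
      (f ⟨2*i.val, by have := i.isLt; omega⟩ + f ⟨2*i.val+1, by have := i.isLt; omega⟩) := by
  have hb : Function.Bijective
      (fun p : Fin n × Fin 2 => (⟨2*p.1.val+p.2.val, by have := p.1.isLt; have := p.2.isLt; omega⟩ : Fin (2*n))) := by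
    constructor
    · rintro ⟨i, b⟩ ⟨i', b'⟩ h
      have h' : 2*i.val+b.val = 2*i'.val+b'.val := congrArg Fin.val h
      have := b.isLt; have := b'.isLt
      have h1 : i.val = i'.val := by omega
      have h2 : b.val = b'.val := by omega
      simp [Prod.ext_iff, Fin.ext_iff, h1, h2]
    · intro j
      have := j.isLt
      exact ⟨(⟨j.val/2, by omega⟩, ⟨j.val%2, by omega⟩), by apply Fin.ext; simp; omega⟩
  rw [← Fintype.sum_bijective _ hb _ f (fun _ => rfl), Fintype.sum_prod_type]
  refine Finset.sum_congr rfl fun i _ => ?_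
  rw [Fin.sum_univ_two]
  norm_num

lemma Smap_even (n : ℕ) (v : Fin n → F4) (i : Fin n) :
    Smap n v ⟨2*i.val, by have := i.isLt; omega⟩ = v i := by
  have hi : (⟨2*i.val/2, by have := i.isLt; omega⟩ : Fin n) = i := Fin.ext (by simp)
  simp only [Smap, Nat.mul_mod_right, if_true, eq_self_iff_true]
  rw [hi]

lemma Smap_odd (n : ℕ) (v : Fin n → F4) (i : Fin n) :
    Smap n v ⟨2*i.val+1, by have := i.isLt; omega⟩ = (v i) ^ 2 := by
  have h : (2*i.val+1) % 2 = 1 := by omega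
  have hi : (⟨(2*i.val+1)/2, by have := i.isLt; omega⟩ : Fin n) = i := Fin.ext (by simp; omega)
  simp only [Smap, h]
  norm_num
  rw [hi]

noncomputable def phi (n : ℕ) (u : Fin (2*n) → F4) : Fin n → F4 :=
  fun i => u ⟨2*i.val, by have := i.isLt; omega⟩ + (u ⟨2*i.val+1, by have := i.isLt; omega⟩)^2

lemma trInner_Smap (n : ℕ) (u : Fin (2*n) → F4) (v : Fin n → F4) :
    trInner u (Smap n v) = trInner (phi n u) v := by
  unfold trInner
  rw [sum_split]
  refine Finset.sum_congr rfl fun i _ => ?_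
  rw [Smap_even, Smap_odd]
  unfold phi
  set a := u ⟨2*i.val, by have := i.isLt; omega⟩ with ha
  set b := u ⟨2*i.val+1, by have := i.isLt; omega⟩ with hb
  have h2 : (a + b^2)^2 = a^2 + b := by rw [F4_add_sq, F4_sq_sq]
  rw [h2, F4_sq_sq]
  ring

lemma F4_add_self (a : F4) : a + a = 0 := by
  have : (2 : F4) = 0 := by
    have : CharP F4 2 := inferInstance
    exact_mod_cast CharP.cast_eq_zero F4 2
  calc a + a = 2 * a := by ring
  _ = 0 := by rw [this, zero_mul]

lemma F4_eq_of_add_eq_zero {a b : F4} (h : a + b = 0) : a = b := by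
  have := F4_add_self b
  calc a = a + (b + b) := by rw [F4_add_self, add_zero]
  _ = (a + b) + b := by ring
  _ = b := by rw [h, zero_add]

def ev (n : ℕ) (i : Fin n) : Fin (2*n) := ⟨2*i.val, by have := i.isLt; omega⟩
def od (n : ℕ) (i : Fin n) : Fin (2*n) := ⟨2*i.val+1, by have := i.isLt; omega⟩
def blk (n : ℕ) (j : Fin (2*n)) : Fin n := ⟨j.val/2, by have := j.isLt; omega⟩

lemma blk_ev (n : ℕ) (i : Fin n) : blk n (ev n i) = i := Fin.ext (by simp [blk, ev])
lemma blk_od (n : ℕ) (i : Fin n) : blk n (od n i) = i := Fin.ext (by simp [blk, od]; omega)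
lemma ev_ne_od (n : ℕ) (i i' : Fin n) : ev n i ≠ od n i' := by
  intro h; have := congrArg Fin.val h; simp [ev, od] at this; omega
lemma ev_inj {n : ℕ} {i i' : Fin n} (h : ev n i = ev n i') : i = i' := by
  have := congrArg Fin.val h; simp [ev] at this; exact Fin.ext (by omega)
lemma od_inj {n : ℕ} {i i' : Fin n} (h : od n i = od n i') : i = i' := by
  have := congrArg Fin.val h; simp [od] at this; exact Fin.ext (by omega)
lemma ev_or_od (n : ℕ) (j : Fin (2*n)) : j = ev n (blk n j) ∨ j = od n (blk n j) := by
  rcases Nat.even_or_odd j.val with h | h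
  · rcases h with ⟨c, hc⟩
    left; apply Fin.ext; simp only [ev, blk]; omega
  · rcases h with ⟨c, hc⟩
    right; apply Fin.ext; simp only [od, blk]; omega

lemma phi_apply (n : ℕ) (u : Fin (2*n) → F4) (i : Fin n) :
    phi n u i = u (ev n i) + (u (od n i))^2 := rfl

lemma mem_dual_S_iff (n : ℕ) (C : Set (Fin n → F4)) (u : Fin (2*n) → F4) :
    u ∈ trDual (Smap n '' C) ↔ phi n u ∈ trDual C := by
  constructor
  · intro h v hv
    rw [← trInner_Smap]
    exact h _ ⟨v, hv, rfl⟩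
  · rintro h v' ⟨v, hv, rfl⟩
    rw [trInner_Smap]
    exact h v hv

lemma zero_mem_trDual {m : ℕ} (C : Set (Fin m → F4)) : (0 : Fin m → F4) ∈ trDual C := by
  intro v hv
  simp [trInner]

lemma norm_eq_one_iff {m : ℕ} (u : Fin m → F4) :
    hammingNorm u = 1 ↔ ∃ j, u j ≠ 0 ∧ ∀ k, k ≠ j → u k = 0 := by
  rw [hammingNorm, Finset.card_eq_one]
  constructor
  · rintro ⟨j, hj⟩
    have hm : ∀ k, u k ≠ 0 ↔ k = j := by
      intro k
      rw [← Finset.mem_singleton, ← hj]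
      simp
    exact ⟨j, (hm j).mpr rfl, fun k hk => by_contra fun h => hk ((hm k).mp h)⟩
  · rintro ⟨j, hj, hz⟩
    refine ⟨j, ?_⟩
    ext k
    simp only [Finset.mem_filter, Finset.mem_univ, true_and, Finset.mem_singleton]
    constructor
    · intro h; by_contra hkj; exact h (hz k hkj)
    · rintro rfl; exact hj

lemma norm_eq_two_iff {m : ℕ} (u : Fin m → F4) :
    hammingNorm u = 2 ↔ ∃ j k, j ≠ k ∧ u j ≠ 0 ∧ u k ≠ 0 ∧
      ∀ t, t ≠ j → t ≠ k → u t = 0 := by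
  rw [hammingNorm, Finset.card_eq_two]
  constructor
  · rintro ⟨j, k, hjk, hs⟩
    have hm : ∀ t, u t ≠ 0 ↔ (t = j ∨ t = k) := by
      intro t
      rw [show (t = j ∨ t = k) ↔ t ∈ ({j, k} : Finset (Fin m)) by simp, ← hs]
      simp
    exact ⟨j, k, hjk, (hm j).mpr (Or.inl rfl), (hm k).mpr (Or.inr rfl),
      fun t h1 h2 => by_contra fun h => by rcases (hm t).mp h with h'|h' <;> simp_all⟩
  · rintro ⟨j, k, hjk, hj, hk, hz⟩
    refine ⟨j, k, hjk, ?_⟩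
    ext t
    simp only [Finset.mem_filter, Finset.mem_univ, true_and, Finset.mem_insert,
      Finset.mem_singleton]
    constructor
    · intro h; by_contra hc; push_neg at hc; exact h (hz t hc.1 hc.2)
    · rintro (rfl|rfl) <;> assumption

lemma phi_norm_one {n : ℕ} {u : Fin (2*n) → F4} (h : hammingNorm u = 1) :
    hammingNorm (phi n u) = 1 := by
  rw [norm_eq_one_iff] at h ⊢
  obtain ⟨j, hj, hz⟩ := h
  refine ⟨blk n j, ?_, ?_⟩
  · rw [phi_apply]
    rcases ev_or_od n j with hc | hc
    · have h1 : u (od n (blk n j)) = 0 :=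
        hz _ (fun e => ev_ne_od n _ _ ((e.trans hc).symm))
      rw [h1, ← hc]
      simpa using hj
    · have h1 : u (ev n (blk n j)) = 0 :=
        hz _ (fun e => ev_ne_od n _ _ (hc.symm.trans e.symm).symm)
      rw [h1, ← hc, zero_add]
      exact pow_ne_zero 2 hj
  · intro i hi
    have h1 : u (ev n i) = 0 := hz _ (fun e => hi (by rw [← e, blk_ev]))
    have h2 : u (od n i) = 0 := hz _ (fun e => hi (by rw [← e, blk_od]))
    rw [phi_apply, h1, h2]
    simp

noncomputable def same (n : ℕ) (i : Fin n) (b : F4) : Fin (2*n) → F4 :=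
  fun j => if j = ev n i then b^2 else if j = od n i then b else 0

lemma same_ev (n : ℕ) (i : Fin n) (b : F4) : same n i b (ev n i) = b^2 := by
  simp [same]

lemma same_od (n : ℕ) (i : Fin n) (b : F4) : same n i b (od n i) = b := by
  simp [same, (ev_ne_od n i i).symm]

lemma same_norm {n : ℕ} (i : Fin n) {b : F4} (hb : b ≠ 0) :
    hammingNorm (same n i b) = 2 := by
  rw [norm_eq_two_iff]
  refine ⟨ev n i, od n i, ev_ne_od n i i, ?_, ?_, ?_⟩
  · rw [same_ev]; exact pow_ne_zero 2 hb
  · rw [same_od]; exact hb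
  · intro t h1 h2
    simp [same, h1, h2]

lemma phi_same (n : ℕ) (i : Fin n) (b : F4) : phi n (same n i b) = 0 := by
  funext i'
  rw [Pi.zero_apply, phi_apply]
  by_cases h : i' = i
  · subst h
    rw [same_ev, same_od, F4_add_self]
  · have e1 : ev n i' ≠ ev n i := fun e => h (ev_inj e)
    have e2 : od n i' ≠ od n i := fun e => h (od_inj e)
    have h1 : same n i b (ev n i') = 0 := by simp [same, e1, ev_ne_od n i' i]
    have h2 : same n i b (od n i') = 0 := by simp [same, (ev_ne_od n i i').symm, e2]
    simp [h1, h2]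

lemma same_inj {n : ℕ} {i i' : Fin n} {b b' : F4} (hb : b ≠ 0) (hb' : b' ≠ 0)
    (h : same n i b = same n i' b') : i = i' ∧ b = b' := by
  have hii : i = i' := by
    by_contra hii
    have e1 : ev n i ≠ ev n i' := fun e => hii (ev_inj e)
    have h1 : same n i' b' (ev n i) = 0 := by simp [same, e1, ev_ne_od n i i']
    have := congrFun h (ev n i)
    rw [same_ev, h1] at this
    exact pow_ne_zero 2 hb this
  subst hii
  refine ⟨rfl, ?_⟩
  have := congrFun h (od n i)
  rwa [same_od, same_od] at this

lemma mem_same_range {n : ℕ} {u : Fin (2*n) → F4} (h2 : hammingNorm u = 2)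
    (h0 : phi n u = 0) : ∃ i b, b ≠ 0 ∧ u = same n i b := by
  obtain ⟨j, k, hjk, hj, hk, hz⟩ := (norm_eq_two_iff u).mp h2
  have hb : blk n j = blk n k := by
    by_contra hbb
    have hphi : phi n u (blk n j) ≠ 0 := by
      rw [phi_apply]
      rcases ev_or_od n j with hc | hc
      · have hodz : u (od n (blk n j)) = 0 := by
          apply hz
          · exact fun e => ev_ne_od n _ _ ((e.trans hc).symm)
          · exact fun e => hbb (by rw [← e, blk_od])
        rw [hodz, ← hc]
        simpa using hj
      · have hevz : u (ev n (blk n j)) = 0 := by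
          apply hz
          · exact fun e => ev_ne_od n _ _ (hc.symm.trans e.symm).symm
          · exact fun e => hbb (by rw [← e, blk_ev])
        rw [hevz, ← hc, zero_add]
        exact pow_ne_zero 2 hj
    exact hphi (by rw [h0]; rfl)
  rcases ev_or_od n j with hcj | hcj <;> rcases ev_or_od n k with hck | hck
  · rw [← hb] at hck
    exact absurd (hcj.trans hck.symm) hjk
  · -- j = ev i, k = od i
    rw [← hb] at hck
    have hphi : u j + (u k)^2 = 0 := by
      have := congrFun h0 (blk n j)
      rwa [Pi.zero_apply, phi_apply, ← hcj, ← hck] at this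
    refine ⟨blk n j, u k, hk, ?_⟩
    funext t
    by_cases ht1 : t = ev n (blk n j)
    · rw [ht1, same_ev, ← hcj]
      exact F4_eq_of_add_eq_zero hphi
    · by_cases ht2 : t = od n (blk n j)
      · rw [ht2, same_od, ← hck]
      · rw [hz t (fun e => ht1 (e.trans hcj)) (fun e => ht2 (e.trans hck))]
        simp [same, ht1, ht2]
  · -- j = od i, k = ev i
    rw [← hb] at hck
    have hphi : u k + (u j)^2 = 0 := by
      have := congrFun h0 (blk n j)
      rwa [Pi.zero_apply, phi_apply, ← hcj, ← hck] at this
    refine ⟨blk n j, u j, hj, ?_⟩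
    funext t
    by_cases ht1 : t = ev n (blk n j)
    · rw [ht1, same_ev, ← hck]
      exact F4_eq_of_add_eq_zero hphi
    · by_cases ht2 : t = od n (blk n j)
      · rw [ht2, same_od, ← hcj]
      · rw [hz t (fun e => ht2 (e.trans hcj)) (fun e => ht1 (e.trans hck))]
        simp [same, ht1, ht2]
  · rw [← hb] at hck
    exact absurd (hcj.trans hck.symm) hjk

noncomputable def supf {m : ℕ} (w : Fin m → F4) : Finset (Fin m) :=
  Finset.univ.filter (fun i => w i ≠ 0)

lemma mem_supf {m : ℕ} (w : Fin m → F4) (i : Fin m) : i ∈ supf w ↔ w i ≠ 0 := by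
  simp [supf]

lemma norm_eq_card_supf {m : ℕ} (w : Fin m → F4) : hammingNorm w = (supf w).card := by
  rw [hammingNorm, supf]

noncomputable def beta {n : ℕ} (w : Fin n → F4) (b₁ b₂ : Bool) (i : Fin n) : Bool :=
  if (i : WithTop (Fin n)) = (supf w).min then b₁ else b₂

noncomputable def Gmap (n : ℕ) (w : Fin n → F4) (b₁ b₂ : Bool) : Fin (2*n) → F4 :=
  fun j => if j.val % 2 = 0 then (if beta w b₁ b₂ (blk n j) then w (blk n j) else 0)
           else (if beta w b₁ b₂ (blk n j) then 0 else (w (blk n j))^2)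

lemma Gmap_ev (n : ℕ) (w : Fin n → F4) (b₁ b₂ : Bool) (i : Fin n) :
    Gmap n w b₁ b₂ (ev n i) = if beta w b₁ b₂ i then w i else 0 := by
  simp only [Gmap]
  rw [if_pos (show (ev n i).val % 2 = 0 from Nat.mul_mod_right 2 i.val), blk_ev]

lemma Gmap_od (n : ℕ) (w : Fin n → F4) (b₁ b₂ : Bool) (i : Fin n) :
    Gmap n w b₁ b₂ (od n i) = if beta w b₁ b₂ i then 0 else (w i)^2 := by
  simp only [Gmap]
  rw [if_neg (show ¬((od n i).val % 2 = 0) from by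
    show ¬((2*i.val+1) % 2 = 0); omega), blk_od]

lemma phi_Gmap (n : ℕ) (w : Fin n → F4) (b₁ b₂ : Bool) :
    phi n (Gmap n w b₁ b₂) = w := by
  funext i
  rw [phi_apply, Gmap_ev, Gmap_od]
  cases h : beta w b₁ b₂ i <;> simp [F4_sq_sq]

lemma Gmap_norm {n : ℕ} {w : Fin n → F4} (b₁ b₂ : Bool) (hw : hammingNorm w = 2) :
    hammingNorm (Gmap n w b₁ b₂) = 2 := by
  obtain ⟨i₁, i₂, h12, h1, h2, hz⟩ := (norm_eq_two_iff w).mp hw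
  set P : Fin n → Fin (2*n) := fun i => if beta w b₁ b₂ i then ev n i else od n i with hP
  have hblkP : ∀ i, blk n (P i) = i := by
    intro i
    rw [hP]
    by_cases h : beta w b₁ b₂ i <;> simp [h, blk_ev, blk_od]
  have hvalP : ∀ i, w i ≠ 0 → Gmap n w b₁ b₂ (P i) ≠ 0 := by
    intro i hi
    rw [hP]
    by_cases h : beta w b₁ b₂ i <;>
      simp [h, Gmap_ev, Gmap_od, hi, pow_ne_zero]
  have hrest : ∀ t, t ≠ P i₁ → t ≠ P i₂ → Gmap n w b₁ b₂ t = 0 := by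
    intro t ht1 ht2
    have hwz : beta w b₁ b₂ (blk n t) = true → (t = ev n (blk n t)) →
        w (blk n t) = 0 := by
      intro hβ hc
      by_contra hwi
      have : blk n t = i₁ ∨ blk n t = i₂ := by
        by_contra hcc
        push_neg at hcc
        exact hwi (hz _ hcc.1 hcc.2)
      rcases this with h' | h'
      · exact ht1 (by rw [hP]; simp only [h' ▸ hβ, if_pos]; rw [← h', ← hc])
      · exact ht2 (by rw [hP]; simp only [h' ▸ hβ, if_pos]; rw [← h', ← hc])
    have hwz' : beta w b₁ b₂ (blk n t) = false → (t = od n (blk n t)) →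
        w (blk n t) = 0 := by
      intro hβ hc
      by_contra hwi
      have : blk n t = i₁ ∨ blk n t = i₂ := by
        by_contra hcc
        push_neg at hcc
        exact hwi (hz _ hcc.1 hcc.2)
      rcases this with h' | h'
      · exact ht1 (by rw [hP]; simp only [h' ▸ hβ, if_neg, Bool.false_eq_true,
          ite_false]; rw [← h', ← hc])
      · exact ht2 (by rw [hP]; simp only [h' ▸ hβ, if_neg, Bool.false_eq_true,
          ite_false]; rw [← h', ← hc])
    rcases ev_or_od n t with hc | hc
    · rw [hc, Gmap_ev]
      cases hβ : beta w b₁ b₂ (blk n t)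
      · simp
      · simp [hwz hβ hc]
    · rw [hc, Gmap_od]
      cases hβ : beta w b₁ b₂ (blk n t)
      · simp [hwz' hβ hc]
      · simp
  rw [norm_eq_two_iff]
  refine ⟨P i₁, P i₂, ?_, hvalP i₁ h1, hvalP i₂ h2, hrest⟩
  intro e
  exact h12 (by rw [← hblkP i₁, e, hblkP])

lemma supf_nonempty {n : ℕ} {w : Fin n → F4} (hw : hammingNorm w = 2) :
    (supf w).Nonempty :=
  Finset.card_pos.mp (by rw [← norm_eq_card_supf, hw]; norm_num)

lemma beta_min' {n : ℕ} (w : Fin n → F4) (b₁ b₂ : Bool) (h : (supf w).Nonempty) :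
    beta w b₁ b₂ ((supf w).min' h) = b₁ :=
  if_pos (Finset.coe_min' h)

lemma beta_ne_min {n : ℕ} (w : Fin n → F4) (b₁ b₂ : Bool) (h : (supf w).Nonempty)
    {i : Fin n} (hi : i ≠ (supf w).min' h) : beta w b₁ b₂ i = b₂ := by
  apply if_neg
  intro e
  exact hi (WithTop.coe_injective (e.trans (Finset.coe_min' h).symm))

lemma min'_ne_max' {n : ℕ} {w : Fin n → F4} (hw : hammingNorm w = 2)
    (h : (supf w).Nonempty) : (supf w).min' h ≠ (supf w).max' h :=
  ne_of_lt (Finset.min'_lt_max'_of_card _ (by rw [← norm_eq_card_supf, hw]; norm_num))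

lemma Gmap_inj {n : ℕ} {w w' : Fin n → F4} {b₁ b₂ b₁' b₂' : Bool}
    (hw : hammingNorm w = 2) (h : Gmap n w b₁ b₂ = Gmap n w' b₁' b₂') :
    w = w' ∧ b₁ = b₁' ∧ b₂ = b₂' := by
  have hww : w = w' := by rw [← phi_Gmap n w b₁ b₂, h, phi_Gmap]
  subst hww
  refine ⟨rfl, ?_, ?_⟩
  · have hne := supf_nonempty hw
    have hmem := Finset.min'_mem _ hne
    rw [mem_supf] at hmem
    have := congrFun h (ev n ((supf w).min' hne))
    rw [Gmap_ev, Gmap_ev, beta_min', beta_min'] at this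
    cases b₁ <;> cases b₁' <;> simp_all
  · have hne := supf_nonempty hw
    have hmem := Finset.max'_mem _ hne
    rw [mem_supf] at hmem
    have hmm := min'_ne_max' hw hne
    have := congrFun h (ev n ((supf w).max' hne))
    rw [Gmap_ev, Gmap_ev, beta_ne_min w b₁ b₂ hne (Ne.symm hmm),
      beta_ne_min w b₁' b₂' hne (Ne.symm hmm)] at this
    cases b₂ <;> cases b₂' <;> simp_all

lemma Gmap_surj {n : ℕ} {u : Fin (2*n) → F4} (hu2 : hammingNorm u = 2)
    (hp2 : hammingNorm (phi n u) = 2) :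
    ∃ b₁ b₂ : Bool, Gmap n (phi n u) b₁ b₂ = u := by
  obtain ⟨j, k, hjk, hj, hk, hz⟩ := (norm_eq_two_iff u).mp hu2
  -- off the two blocks, u vanishes
  have hblkne : ∀ i : Fin n, i ≠ blk n j → i ≠ blk n k →
      u (ev n i) = 0 ∧ u (od n i) = 0 := by
    intro i hij hik
    constructor
    · exact hz _ (fun e => hij (by rw [← e, blk_ev])) (fun e => hik (by rw [← e, blk_ev]))
    · exact hz _ (fun e => hij (by rw [← e, blk_od])) (fun e => hik (by rw [← e, blk_od]))
  have hwz : ∀ i : Fin n, i ≠ blk n j → i ≠ blk n k → phi n u i = 0 := by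
    intro i hij hik
    obtain ⟨he, ho⟩ := hblkne i hij hik
    rw [phi_apply, he, ho]
    simp
  -- the two blocks are distinct
  have hdiff : blk n j ≠ blk n k := by
    intro e
    have hsub : supf (phi n u) ⊆ {blk n j} := by
      intro i hi
      rw [mem_supf] at hi
      rw [Finset.mem_singleton]
      by_contra hc
      exact hi (hwz i hc (fun e' => hc (e'.trans e.symm)))
    have := Finset.card_le_card hsub
    rw [← norm_eq_card_supf, hp2, Finset.card_singleton] at this
    omega
  -- u vanishes on the sibling of any nonzero even position
  have hsep : ∀ i : Fin n, u (ev n i) ≠ 0 → u (od n i) = 0 := by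
    intro i hi
    have hev : ev n i = j ∨ ev n i = k := by
      by_contra hc
      push_neg at hc
      exact hi (hz _ hc.1 hc.2)
    apply hz
    · intro e
      rcases hev with h' | h'
      · exact ev_ne_od n i i (h'.trans e.symm)
      · exact hdiff (by rw [← h', ← e, blk_ev, blk_od])
    · intro e
      rcases hev with h' | h'
      · exact hdiff (by rw [← h', ← e, blk_ev, blk_od])
      · exact ev_ne_od n i i (h'.trans e.symm)
  -- nonvanishing of phi on the two blocks
  have hwj : phi n u (blk n j) ≠ 0 := by
    rw [phi_apply]
    rcases ev_or_od n j with hc | hc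
    · have : u (od n (blk n j)) = 0 := by
        apply hz
        · exact fun e => ev_ne_od n _ _ ((e.trans hc).symm)
        · exact fun e => hdiff (by rw [← e, blk_od])
      rw [this, ← hc]
      simpa using hj
    · have : u (ev n (blk n j)) = 0 := by
        apply hz
        · exact fun e => ev_ne_od n _ _ (hc.symm.trans e.symm).symm
        · exact fun e => hdiff (by rw [← e, blk_ev])
      rw [this, ← hc, zero_add]
      exact pow_ne_zero 2 hj
  have hwk : phi n u (blk n k) ≠ 0 := by
    rw [phi_apply]
    rcases ev_or_od n k with hc | hc
    · have : u (od n (blk n k)) = 0 := by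
        apply hz
        · exact fun e => hdiff (by rw [← e, blk_od])
        · exact fun e => ev_ne_od n _ _ ((e.trans hc).symm)
      rw [this, ← hc]
      simpa using hk
    · have : u (ev n (blk n k)) = 0 := by
        apply hz
        · exact fun e => hdiff (by rw [← e, blk_ev])
        · exact fun e => ev_ne_od n _ _ (hc.symm.trans e.symm).symm
      rw [this, ← hc, zero_add]
      exact pow_ne_zero 2 hk
  -- support of phi u is exactly the two blocks
  have hne := supf_nonempty hp2
  set m₁ := (supf (phi n u)).min' hne with hm₁
  set m₂ := (supf (phi n u)).max' hne with hm₂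
  have hmm : m₁ ≠ m₂ := min'_ne_max' hp2 hne
  have hsupf : supf (phi n u) = {m₁, m₂} := by
    symm
    apply Finset.eq_of_subset_of_card_le
    · intro t ht
      rcases Finset.mem_insert.mp ht with rfl | ht'
      · exact Finset.min'_mem _ hne
      · rw [Finset.mem_singleton] at ht'
        rw [ht']
        exact Finset.max'_mem _ hne
    · rw [← norm_eq_card_supf, hp2]
      rw [Finset.card_insert_of_notMem (by simpa using hmm), Finset.card_singleton]
  refine ⟨decide (u (ev n m₁) ≠ 0), decide (u (ev n m₂) ≠ 0), ?_⟩
  have hbeta : ∀ i : Fin n, phi n u i ≠ 0 →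
      beta (phi n u) (decide (u (ev n m₁) ≠ 0)) (decide (u (ev n m₂) ≠ 0)) i =
        decide (u (ev n i) ≠ 0) := by
    intro i hi
    have : i ∈ supf (phi n u) := (mem_supf _ i).mpr hi
    rw [hsupf] at this
    rcases Finset.mem_insert.mp this with rfl | h'
    · exact beta_min' _ _ _ hne
    · rw [Finset.mem_singleton] at h'
      subst h'
      exact beta_ne_min _ _ _ hne (Ne.symm hmm)
  funext t
  rcases ev_or_od n t with hc | hc
  · rw [hc, Gmap_ev]
    by_cases hwi : phi n u (blk n t) = 0
    · have hue : u (ev n (blk n t)) = 0 := by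
        apply hz
        · exact fun e => hwj (by rw [← e, blk_ev]; exact hwi)
        · exact fun e => hwk (by rw [← e, blk_ev]; exact hwi)
      rw [hue]
      cases beta (phi n u) _ _ (blk n t) <;> simp [hwi]
    · rw [hbeta _ hwi]
      by_cases hue : u (ev n (blk n t)) = 0
      · simp [hue]
      · have hod : u (od n (blk n t)) = 0 := hsep _ hue
        rw [if_pos (by simpa using hue), phi_apply, hod]
        simp
  · rw [hc, Gmap_od]
    by_cases hwi : phi n u (blk n t) = 0
    · have huo : u (od n (blk n t)) = 0 := by
        apply hz
        · exact fun e => hwj (by rw [← e, blk_od]; exact hwi)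
        · exact fun e => hwk (by rw [← e, blk_od]; exact hwi)
      rw [huo]
      cases beta (phi n u) _ _ (blk n t) <;> simp [hwi]
    · rw [hbeta _ hwi]
      by_cases hue : u (ev n (blk n t)) = 0
      · rw [if_neg (by simp [hue]), phi_apply, hue, zero_add, F4_sq_sq]
      · have hod : u (od n (blk n t)) = 0 := hsep _ hue
        rw [hod, if_pos (by simpa using hue)]

lemma phi_norm_le_two {n : ℕ} {u : Fin (2*n) → F4} (h : hammingNorm u = 2) :
    hammingNorm (phi n u) ≤ 2 := by
  obtain ⟨j, k, hjk, hj, hk, hz⟩ := (norm_eq_two_iff u).mp h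
  rw [norm_eq_card_supf]
  have hsub : supf (phi n u) ⊆ {blk n j, blk n k} := by
    intro i hi
    rw [mem_supf] at hi
    rw [Finset.mem_insert, Finset.mem_singleton]
    by_contra hc
    push_neg at hc
    apply hi
    have he : u (ev n i) = 0 :=
      hz _ (fun e => hc.1 (by rw [← e, blk_ev])) (fun e => hc.2 (by rw [← e, blk_ev]))
    have ho : u (od n i) = 0 :=
      hz _ (fun e => hc.1 (by rw [← e, blk_od])) (fun e => hc.2 (by rw [← e, blk_od]))
    rw [phi_apply, he, ho]
    simp
  refine le_trans (Finset.card_le_card hsub) ?_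
  refine le_trans (Finset.card_insert_le _ _) ?_
  simp

lemma card_F4_ne_zero : Fintype.card {b : F4 // b ≠ 0} = 3 := by
  have h1 : Fintype.card {b : F4 // ¬ b = 0} = Fintype.card F4 - Fintype.card {b : F4 // b = 0} :=
    Fintype.card_subtype_compl _
  rw [Fintype.card_subtype_eq (0 : F4), F4_card] at h1
  exact h1

/-- Let `C ⊆ F4^n` be an additive code whose trace-Hermitian dual
has no codewords of weight `1`, and let `A₂⊥` be the number of weight-`2` codewords
of `C^⊥_tr`.  Then `S(C)^⊥_tr` has no codewords of weight `1` and has exactly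
`3n + 4·A₂⊥` codewords of weight `2`.  In particular, if `d(C^⊥_tr) ≥ 3` then
`S(C)^⊥_tr` has exactly `3n` codewords of weight `2`. -/
theorem weight_two_count_trDual_Smap (n : ℕ) (C : AddSubgroup (Fin n → F4)) (A2 : ℕ)
    (h1 : ∀ u ∈ trDual (C : Set (Fin n → F4)), hammingNorm u ≠ 1)
    (hA2 : {u ∈ trDual (C : Set (Fin n → F4)) | hammingNorm u = 2}.ncard = A2) :
    (∀ u ∈ trDual (Smap n '' (C : Set (Fin n → F4))), hammingNorm u ≠ 1) ∧
    {u ∈ trDual (Smap n '' (C : Set (Fin n → F4))) | hammingNorm u = 2}.ncard =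
      3 * n + 4 * A2 ∧
    ((∀ u ∈ trDual (C : Set (Fin n → F4)), u ≠ 0 → 3 ≤ hammingNorm u) →
      {u ∈ trDual (Smap n '' (C : Set (Fin n → F4))) | hammingNorm u = 2}.ncard =
        3 * n) := by
  have part1 : ∀ u ∈ trDual (Smap n '' (C : Set (Fin n → F4))), hammingNorm u ≠ 1 :=
    fun u hu h1u => h1 (phi n u) ((mem_dual_S_iff n _ u).mp hu) (phi_norm_one h1u)
  set W2 : Set (Fin n → F4) := {w ∈ trDual (C : Set (Fin n → F4)) | hammingNorm w = 2}
    with hW2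
  set T0 : Set (Fin (2*n) → F4) :=
    Set.range (fun p : Fin n × {b : F4 // b ≠ 0} => same n p.1 p.2.1) with hT0
  set G : (Fin n → F4) × Bool × Bool → (Fin (2*n) → F4) :=
    fun p => Gmap n p.1 p.2.1 p.2.2 with hG
  set T2 : Set (Fin (2*n) → F4) := G '' (W2 ×ˢ (Set.univ : Set (Bool × Bool))) with hT2
  have hsplit : {u ∈ trDual (Smap n '' (C : Set (Fin n → F4))) | hammingNorm u = 2} =
      T0 ∪ T2 := by
    ext u
    constructor
    · rintro ⟨hd, h2⟩
      have hphid : phi n u ∈ trDual (C : Set (Fin n → F4)) := (mem_dual_S_iff n _ u).mp hd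
      have hle := phi_norm_le_two h2
      have hne1 := h1 _ hphid
      interval_cases h : hammingNorm (phi n u)
      · left
        obtain ⟨i, b, hb, hub⟩ := mem_same_range h2 (hammingNorm_eq_zero.mp h)
        exact ⟨(i, ⟨b, hb⟩), hub.symm⟩
      · exact absurd rfl hne1
      · right
        obtain ⟨b₁, b₂, hbb⟩ := Gmap_surj h2 h
        exact ⟨(phi n u, b₁, b₂), Set.mem_prod.mpr ⟨⟨hphid, h⟩, Set.mem_univ _⟩, hbb⟩
    · rintro (⟨⟨i, b⟩, rfl⟩ | ⟨⟨w, b₁, b₂⟩, ⟨hw, -⟩, rfl⟩)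
      · refine ⟨?_, same_norm i b.2⟩
        rw [mem_dual_S_iff, phi_same]
        exact zero_mem_trDual _
      · refine ⟨?_, Gmap_norm b₁ b₂ hw.2⟩
        rw [mem_dual_S_iff]
        show phi n (Gmap n w b₁ b₂) ∈ _
        rw [phi_Gmap]
        exact hw.1
  have hdisj : Disjoint T0 T2 := by
    rw [Set.disjoint_left]
    rintro u ⟨⟨i, b⟩, rfl⟩ ⟨⟨w, b₁, b₂⟩, ⟨hw, -⟩, he⟩
    have h0 : phi n (same n i b.1) = 0 := phi_same n i b.1
    have he' : Gmap n w b₁ b₂ = same n i b.1 := he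
    have h2 : phi n (same n i b.1) = w := by
      rw [← he']
      exact phi_Gmap n w b₁ b₂
    rw [h2] at h0
    rw [h0] at hw
    have := hw.2
    rw [hammingNorm_eq_zero.mpr rfl] at this
    omega
  have hcard0 : T0.ncard = 3 * n := by
    have hinj : Function.Injective
        (fun p : Fin n × {b : F4 // b ≠ 0} => same n p.1 p.2.1) := by
      rintro ⟨i, b, hb⟩ ⟨i', b', hb'⟩ h
      obtain ⟨h1', h2'⟩ := same_inj hb hb' h
      simp only [Prod.mk.injEq, Subtype.mk.injEq]
      exact ⟨h1', h2'⟩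
    rw [hT0, ← Set.image_univ, Set.ncard_image_of_injective _ hinj, Set.ncard_univ,
      Nat.card_eq_fintype_card, Fintype.card_prod, Fintype.card_fin, card_F4_ne_zero]
    ring
  have hcard2 : T2.ncard = 4 * A2 := by
    have hinjOn : Set.InjOn G (W2 ×ˢ (Set.univ : Set (Bool × Bool))) := by
      rintro ⟨w, b₁, b₂⟩ hp ⟨w', b₁', b₂'⟩ hq h
      obtain ⟨hw, -⟩ := Set.mem_prod.mp hp
      obtain ⟨h1', h2', h3'⟩ := Gmap_inj hw.2 h
      simp only [Prod.mk.injEq]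
      exact ⟨h1', h2', h3'⟩
    rw [hT2, Set.ncard_image_of_injOn hinjOn]
    rw [← Nat.card_coe_set_eq, Nat.card_congr (Equiv.Set.prod _ _), Nat.card_prod,
      Nat.card_coe_set_eq, hA2, Nat.card_congr (Equiv.Set.univ _),
      Nat.card_eq_fintype_card, Fintype.card_prod, Fintype.card_bool]
    ring
  have key : {u ∈ trDual (Smap n '' (C : Set (Fin n → F4))) | hammingNorm u = 2}.ncard =
      3 * n + 4 * A2 := by
    rw [hsplit, Set.ncard_union_eq hdisj (Set.toFinite _) (Set.toFinite _), hcard0, hcard2]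
  refine ⟨part1, key, fun hmin => ?_⟩
  have hempty : W2 = ∅ := by
    ext w
    simp only [hW2, Set.mem_setOf_eq, Set.mem_empty_iff_false, iff_false, not_and]
    intro hw h2
    have hwne : w ≠ 0 := by
      intro e
      rw [e, hammingNorm_eq_zero.mpr rfl] at h2
      omega
    have := hmin w hw hwne
    omega
  have hA20 : A2 = 0 := by
    rw [← hA2, hempty, Set.ncard_empty]
  rw [key, hA20]
  omega
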